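/- Let N ≥ 1, 0 < s < 1, and let ū be a C² function on an open set E ⊂ ℝ^N × (0,∞) satisfying div(t^{1−2s} ∇ū) = 0 on E, where points are z = (x,t) ∈ ℝ^N × (0,∞). Then for any fixed z₀ = (x₀, 0) with x₀ ∈ ℝ^N, the pointwise identity div( t^{1−2s}·⟨z − z₀, ∇ū⟩·∇ū − t^{1−2s}·(|∇ū|²/2)·(z − z₀) ) + ((N−2s)/2)·t^{1−2s}·|∇ū|² = 0 holds on E. -/

import Mathlib

/-- The divergence of a vector field on `ℝ^n`. -/
noncomputable def vdiv {n : ℕ}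
    (G : EuclideanSpace ℝ (Fin n) → EuclideanSpace ℝ (Fin n))
    (z : EuclideanSpace ℝ (Fin n)) : ℝ :=
  ∑ i, fderiv ℝ G z (EuclideanSpace.single i 1) i

private lemma coord_eq_inner {n : ℕ} (x : EuclideanSpace ℝ (Fin n)) (i : Fin n) :
    x i = (inner ℝ (EuclideanSpace.single i (1:ℝ)) x : ℝ) := by
  rw [EuclideanSpace.inner_single_left]; simp

private lemma toDualSymm_coord {n : ℕ} (f : EuclideanSpace ℝ (Fin n) →L[ℝ] ℝ) (i : Fin n) :
    ((InnerProductSpace.toDual ℝ (EuclideanSpace ℝ (Fin n))).symm f) i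
      = f (EuclideanSpace.single i 1) := by
  rw [coord_eq_inner ((InnerProductSpace.toDual ℝ (EuclideanSpace ℝ (Fin n))).symm f) i,
    real_inner_comm, InnerProductSpace.toDual_symm_apply]

private lemma gradient_coord {n : ℕ} (u : EuclideanSpace ℝ (Fin n) → ℝ)
    (x : EuclideanSpace ℝ (Fin n)) (i : Fin n) :
    gradient u x i = fderiv ℝ u x (EuclideanSpace.single i 1) :=
  toDualSymm_coord _ i

private lemma hasFDerivAt_div_const {E : Type*} [NormedAddCommGroup E] [NormedSpace ℝ E]
    {f : E → ℝ} {f' : E →L[ℝ] ℝ} {x : E} (h : HasFDerivAt f f' x) (c : ℝ) :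
    HasFDerivAt (fun x => f x / c) (c⁻¹ • f') x := by
  simpa [div_eq_mul_inv, mul_comm] using h.mul_const c⁻¹

private lemma rinner {n : ℕ} (x y : EuclideanSpace ℝ (Fin n)) :
    (inner ℝ x y : ℝ) = ∑ j, x j * y j := by
  simp [PiLp.inner_apply, mul_comm]

set_option maxHeartbeats 2000000 in
/-- Pointwise Rellich–Pohozaev divergence identity for the degenerate-elliptic
extension operator `div(t^{1−2s}∇·)`: if `div(t^{1−2s}∇ū) = 0` on an open set
`E ⊂ ℝ^N × (0,∞)` (the last coordinate playing the role of `t`), and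
`z₀ = (x₀, 0)`, then
`div(t^{1−2s}⟨z−z₀,∇ū⟩∇ū − t^{1−2s}(|∇ū|²/2)(z−z₀)) + ((N−2s)/2)t^{1−2s}|∇ū|² = 0`
on `E`. -/
theorem stmt_14 (N : ℕ) (hN : 1 ≤ N) (s : ℝ) (hs0 : 0 < s) (hs1 : s < 1)
    (E : Set (EuclideanSpace ℝ (Fin (N + 1)))) (hE : IsOpen E)
    (ht : ∀ z ∈ E, 0 < z (Fin.last N))
    (u : EuclideanSpace ℝ (Fin (N + 1)) → ℝ) (hu : ContDiffOn ℝ 2 u E)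
    (hpde : ∀ z ∈ E,
      vdiv (fun z => (z (Fin.last N) ^ (1 - 2 * s)) • gradient u z) z = 0)
    (z₀ : EuclideanSpace ℝ (Fin (N + 1))) (hz₀ : z₀ (Fin.last N) = 0) :
    ∀ z ∈ E,
      vdiv (fun z =>
          (z (Fin.last N) ^ (1 - 2 * s)) •
              ((inner ℝ (z - z₀) (gradient u z) : ℝ) • gradient u z)
            - ((z (Fin.last N) ^ (1 - 2 * s)) * (‖gradient u z‖ ^ 2 / 2)) • (z - z₀)) z
        + (((N : ℝ) - 2 * s) / 2) * (z (Fin.last N) ^ (1 - 2 * s))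
            * ‖gradient u z‖ ^ 2 = 0 := by
  intro z hz
  have hzE : E ∈ nhds z := hE.mem_nhds hz
  set L := Fin.last N with hL
  have ht' : (0:ℝ) < z L := ht z hz
  set a : ℝ := 1 - 2 * s with ha
  have hDdiff : DifferentiableAt ℝ (fderiv ℝ u) z := by
    have h1 : ContDiffOn ℝ 1 (fderiv ℝ u) E := hu.fderiv_of_isOpen hE (by norm_num)
    exact ((h1.differentiableOn one_ne_zero) z hz).differentiableAt hzE
  set B := fderiv ℝ (fderiv ℝ u) z with hB
  have hDz : HasFDerivAt (fderiv ℝ u) B z := hDdiff.hasFDerivAt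
  set J : (EuclideanSpace ℝ (Fin (N+1)) →L[ℝ] ℝ) →L[ℝ] EuclideanSpace ℝ (Fin (N+1)) :=
    ((PiLp.continuousLinearEquiv 2 ℝ (fun _ : Fin (N+1) => ℝ)).symm.toContinuousLinearMap).comp
      (ContinuousLinearMap.pi (fun i =>
        ContinuousLinearMap.apply ℝ ℝ (EuclideanSpace.single i 1))) with hJ
  have hJc : ∀ (f : EuclideanSpace ℝ (Fin (N+1)) →L[ℝ] ℝ) i,
      J f i = f (EuclideanSpace.single i 1) := by
    intro f i
    simp [hJ]
  have hgradJ : gradient u = fun x => J (fderiv ℝ u x) := by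
    funext x
    ext i
    rw [gradient_coord, hJc]
  set W : EuclideanSpace ℝ (Fin (N+1)) →L[ℝ] EuclideanSpace ℝ (Fin (N+1)) := J.comp B with hW
  have hw : HasFDerivAt (gradient u) W z := by
    rw [hgradJ]; exact J.hasFDerivAt.comp z hDz
  have hWc : ∀ v i, W v i = B v (EuclideanSpace.single i 1) := by
    intro v i
    show J (B v) i = _
    rw [hJc]
  have hprojL : HasFDerivAt (fun x : EuclideanSpace ℝ (Fin (N+1)) => x L)
      (EuclideanSpace.proj (𝕜 := ℝ) L) z := by
    exact ContinuousLinearMap.hasFDerivAt (EuclideanSpace.proj (𝕜 := ℝ) L :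
      EuclideanSpace ℝ (Fin (N+1)) →L[ℝ] ℝ)
  have hp : HasFDerivAt (fun x : EuclideanSpace ℝ (Fin (N+1)) => x L ^ a)
      ((a * z L ^ (a - 1)) • (EuclideanSpace.proj (𝕜 := ℝ) L)) z :=
    by have := (Real.hasDerivAt_rpow_const (p := a) (Or.inl ht'.ne')).comp_hasFDerivAt z hprojL; exact this
  have hc : HasFDerivAt (fun x : EuclideanSpace ℝ (Fin (N+1)) => x - z₀)
      (ContinuousLinearMap.id ℝ (EuclideanSpace ℝ (Fin (N+1)))) z := by
    simpa using (hasFDerivAt_id z).sub_const z₀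
  set Q : EuclideanSpace ℝ (Fin (N+1)) →L[ℝ] ℝ :=
    (fderivInnerCLM ℝ (z - z₀, gradient u z)).comp
      ((ContinuousLinearMap.id ℝ (EuclideanSpace ℝ (Fin (N+1)))).prod W) with hQ
  have hq : HasFDerivAt (fun x : EuclideanSpace ℝ (Fin (N+1)) =>
      (inner ℝ (x - z₀) (gradient u x) : ℝ)) Q z := hc.inner (𝕜 := ℝ) hw
  set R : EuclideanSpace ℝ (Fin (N+1)) →L[ℝ] ℝ :=
    (fderivInnerCLM ℝ (gradient u z, gradient u z)).comp (W.prod W) with hR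
  have hS : HasFDerivAt (fun x : EuclideanSpace ℝ (Fin (N+1)) => (‖gradient u x‖^2 : ℝ)) R z := by
    have h := hw.inner (𝕜 := ℝ) hw
    simpa only [real_inner_self_eq_norm_sq] using h
  have hS2 := hasFDerivAt_div_const hS 2
  set P : EuclideanSpace ℝ (Fin (N+1)) →L[ℝ] ℝ :=
    (a * z L ^ (a - 1)) • (EuclideanSpace.proj (𝕜 := ℝ) L) with hP
  -- the PDE at z
  have hG0 : HasFDerivAt (fun x : EuclideanSpace ℝ (Fin (N+1)) => (x L ^ a) • gradient u x)
      ((z L ^ a) • W + P.smulRight (gradient u z)) z := hp.smul hw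
  have hpde' := hpde z hz
  rw [vdiv, hG0.fderiv] at hpde'
  -- the main vector field
  have hG : HasFDerivAt (fun x : EuclideanSpace ℝ (Fin (N+1)) =>
      (x L ^ a) • ((inner ℝ (x - z₀) (gradient u x) : ℝ) • gradient u x)
        - ((x L ^ a) * (‖gradient u x‖ ^ 2 / 2)) • (x - z₀))
      (((z L ^ a) • ((inner ℝ (z - z₀) (gradient u z) : ℝ) • W + Q.smulRight (gradient u z))
          + P.smulRight ((inner ℝ (z - z₀) (gradient u z) : ℝ) • gradient u z))
        - (((z L ^ a) * (‖gradient u z‖ ^ 2 / 2)) •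
              (ContinuousLinearMap.id ℝ (EuclideanSpace ℝ (Fin (N+1))))
            + ((z L ^ a) • ((2:ℝ)⁻¹ • R) + (‖gradient u z‖ ^ 2 / 2) • P).smulRight (z - z₀))) z :=
    (hp.smul (hq.smul hw)).sub ((hp.mul hS2).smul hc)
  rw [vdiv, hG.fderiv]
  simp only [ContinuousLinearMap.sub_apply, ContinuousLinearMap.add_apply,
    ContinuousLinearMap.smul_apply, ContinuousLinearMap.smulRight_apply,
    ContinuousLinearMap.comp_apply, ContinuousLinearMap.prod_apply,
    ContinuousLinearMap.id_apply, fderivInnerCLM_apply, PiLp.add_apply, PiLp.sub_apply,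
    PiLp.smul_apply, smul_eq_mul] at hpde' ⊢
  set d : ℝ := a * z L ^ (a - 1) with hd
  -- coordinate values of the derivative maps
  have hQv : ∀ i, Q (EuclideanSpace.single i 1)
      = (∑ j, (z j - z₀ j) * B (EuclideanSpace.single i 1) (EuclideanSpace.single j 1))
        + gradient u z i := by
    intro i
    rw [hQ]
    simp only [ContinuousLinearMap.comp_apply, ContinuousLinearMap.prod_apply,
      ContinuousLinearMap.id_apply, fderivInnerCLM_apply]
    rw [rinner, ← coord_eq_inner]
    simp only [PiLp.sub_apply, hWc]
  have hRv : ∀ i, R (EuclideanSpace.single i 1)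
      = 2 * ∑ j, gradient u z j * B (EuclideanSpace.single i 1) (EuclideanSpace.single j 1) := by
    intro i
    rw [hR]
    simp only [ContinuousLinearMap.comp_apply, ContinuousLinearMap.prod_apply,
      fderivInnerCLM_apply]
    rw [rinner, rinner]
    simp only [hWc]
    have h2 : ∀ j : Fin (N+1),
        B (EuclideanSpace.single i 1) (EuclideanSpace.single j 1) * gradient u z j
        = gradient u z j * B (EuclideanSpace.single i 1) (EuclideanSpace.single j 1) := by
      intro j; ring
    simp only [h2]
    ring
  have hPv : ∀ i, P (EuclideanSpace.single i 1) = if i = L then d else 0 := by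
    intro i
    rw [hP]
    by_cases h : i = L
    · simp [h, EuclideanSpace.single_apply, PiLp.proj_apply]
    · simp [EuclideanSpace.single_apply, h, Ne.symm h, PiLp.proj_apply]
  have hsymm : ∀ v w, fderiv ℝ (fderiv ℝ u) z v w = fderiv ℝ (fderiv ℝ u) z w v := by
    have h := ((hu z hz).contDiffAt hzE).isSymmSndFDerivAt (by simp)
    exact h
  have hAsymm : ∀ i j, B (EuclideanSpace.single i 1) (EuclideanSpace.single j 1)
      = B (EuclideanSpace.single j 1) (EuclideanSpace.single i 1) := by
    intro i j; rw [hB]; exact hsymm _ _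
  -- the PDE in coordinates
  simp only [hWc, hPv, ite_mul, zero_mul, Finset.sum_add_distrib, Finset.sum_ite_eq',
    Finset.mem_univ, if_true, ← Finset.mul_sum] at hpde'
  -- exponent juggling
  have hdz : d * z L = a * z L ^ a := by
    have h1 : z L ^ (a-1) * z L = z L ^ a := by
      nth_rewrite 2 [← Real.rpow_one (z L)]
      rw [← Real.rpow_add ht']
      norm_num
    rw [hd, mul_assoc, h1]
  -- rewrite the summand into a canonical form
  have hbody : ∀ i : Fin (N+1),
      (z L ^ a *
            ((inner ℝ (z - z₀) (gradient u z) : ℝ) * W (EuclideanSpace.single i 1) i +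
              Q (EuclideanSpace.single i 1) * gradient u z i) +
          P (EuclideanSpace.single i 1) * ((inner ℝ (z - z₀) (gradient u z) : ℝ) * gradient u z i) -
        (z L ^ a * (‖gradient u z‖ ^ 2 / 2) * EuclideanSpace.single i 1 i +
          (z L ^ a * (2⁻¹ * R (EuclideanSpace.single i 1)) +
            ‖gradient u z‖ ^ 2 / 2 * P (EuclideanSpace.single i 1)) *
            (z i - z₀ i)))
      = z L ^ a * (inner ℝ (z - z₀) (gradient u z) : ℝ) *
            B (EuclideanSpace.single i 1) (EuclideanSpace.single i 1)
        + z L ^ a * ((∑ j, (z j - z₀ j) *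
            B (EuclideanSpace.single i 1) (EuclideanSpace.single j 1)) * gradient u z i)
        + z L ^ a * (gradient u z i * gradient u z i)
        + (if i = L then d else 0) * ((inner ℝ (z - z₀) (gradient u z) : ℝ) * gradient u z i)
        - z L ^ a * (‖gradient u z‖ ^ 2 / 2)
        - z L ^ a * ((∑ j, gradient u z j *
            B (EuclideanSpace.single i 1) (EuclideanSpace.single j 1)) * (z i - z₀ i))
        - ‖gradient u z‖ ^ 2 / 2 * ((if i = L then d else 0) * (z i - z₀ i)) := by
    intro i
    rw [hWc, hQv i, hRv i, hPv i]
    have h1 : EuclideanSpace.single i (1:ℝ) i = 1 := by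
      simp [EuclideanSpace.single_apply]
    rw [h1]
    ring
  simp only [hbody]
  simp only [Finset.sum_add_distrib, Finset.sum_sub_distrib]
  have e1 : ∑ i : Fin (N+1), z L ^ a * (inner ℝ (z - z₀) (gradient u z) : ℝ) *
      B (EuclideanSpace.single i 1) (EuclideanSpace.single i 1)
      = z L ^ a * (inner ℝ (z - z₀) (gradient u z) : ℝ) *
        ∑ i : Fin (N+1), B (EuclideanSpace.single i 1) (EuclideanSpace.single i 1) := by
    rw [Finset.mul_sum]
  have e3 : ∑ i : Fin (N+1), z L ^ a * (gradient u z i * gradient u z i)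
      = z L ^ a * ‖gradient u z‖ ^ 2 := by
    rw [← Finset.mul_sum]
    congr 1
    rw [← real_inner_self_eq_norm_sq, rinner]
  have e4 : ∑ i : Fin (N+1), (if i = L then d else 0) *
      ((inner ℝ (z - z₀) (gradient u z) : ℝ) * gradient u z i)
      = d * ((inner ℝ (z - z₀) (gradient u z) : ℝ) * gradient u z L) := by
    simp
  have e5 : ∑ _i : Fin (N+1), z L ^ a * (‖gradient u z‖ ^ 2 / 2)
      = ((N:ℝ)+1) * (z L ^ a * (‖gradient u z‖ ^ 2 / 2)) := by
    rw [Finset.sum_const, Finset.card_univ, Fintype.card_fin, nsmul_eq_mul]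
    push_cast
    ring
  have e7 : ∑ i : Fin (N+1), ‖gradient u z‖ ^ 2 / 2 * ((if i = L then d else 0) * (z i - z₀ i))
      = ‖gradient u z‖ ^ 2 / 2 * (d * z L) := by
    simp [hz₀]
  have e26 : ∑ i : Fin (N+1), z L ^ a * ((∑ j, gradient u z j *
        B (EuclideanSpace.single i 1) (EuclideanSpace.single j 1)) * (z i - z₀ i))
      = ∑ i : Fin (N+1), z L ^ a * ((∑ j, (z j - z₀ j) *
        B (EuclideanSpace.single i 1) (EuclideanSpace.single j 1)) * gradient u z i) := by
    simp only [← Finset.mul_sum]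
    congr 1
    simp only [Finset.sum_mul]
    rw [Finset.sum_comm]
    refine Finset.sum_congr rfl fun i _ => Finset.sum_congr rfl fun j _ => ?_
    rw [hAsymm j i]
    ring
  rw [e1, e3, e4, e5, e7, e26]
  linear_combination (inner ℝ (z - z₀) (gradient u z) : ℝ) * hpde'
    - (‖gradient u z‖ ^ 2 / 2) * hdz + (z L ^ a * ‖gradient u z‖ ^ 2 / 2) * ha
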